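/- Let p be a prime, R a commutative ring, and A a commutative R-algebra of characteristic p. Let δ be an R-derivation of A, and let D be an R-linear endomorphism of A such that: (i) D(1) = 0; (ii) every (p+1)-fold iterated commutator of D with multiplication operators vanishes (D has order ≤ p); and (iii) D(a^p) = (δ a)^p for all a ∈ A. Then for all a, b ∈ A, D(a^p * b) = a^p * D(b) + (δ a)^p * b; that is, the commutator [D, t_{a^p}] equals multiplication by (δ a)^p. -/

import Mathlib

/-- `D` is a differential operator of order `≤ m` in Grothendieck's sense: every
`(m+1)`-fold iterated commutator of `D` with multiplication operators vanishes. -/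
def IsDiffOpLE (R : Type*) {A : Type*} [CommRing R] [CommRing A] [Algebra R A]
    (m : ℕ) (D : A →ₗ[R] A) : Prop :=
  ∀ a : Fin (m + 1) → A,
    Fin.foldl (m + 1)
      (fun E i => E ∘ₗ LinearMap.mulLeft R (a i) - LinearMap.mulLeft R (a i) ∘ₗ E) D = 0

/-! The key point is that in characteristic `p` the commutator map `E ↦ [E, t_a]` satisfies
`[·, t_a]^p = [·, t_{a^p}]`, since it is the difference of the commuting operators of right and
left multiplication by `t_a`. Hence `C = [D, t_{a^p}]` is a `p`-fold iterated commutator of `D`,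
and the order hypothesis makes `C` commute with every `t_b`, so `C b = b * C 1`; finally
`C 1 = D (a^p) = (δ a)^p` because `D 1 = 0`. -/

theorem Fin.foldl_const {α : Type*} (f : α → α) (n : ℕ) (x : α) :
    Fin.foldl n (fun y (_ : Fin n) => f y) x = f^[n] x := by
  induction n generalizing x with
  | zero => simp
  | succ n ih => rw [Fin.foldl_succ, ih, Function.iterate_succ_apply]

theorem Module.End.charP_of_charP (R B : Type*) [CommRing R] [Ring B] [Algebra R B] (p : ℕ)
    [CharP B p] : CharP (Module.End R B) p :=
  charP_of_injective_ringHom (Algebra.lmul_injective (R := R) (A := B)) p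

section Commutator

open LinearMap

variable (R : Type*) {A : Type*} [CommRing R] [Ring A] [Algebra R A]

def commutatorMulLeft (a : A) : Module.End R (Module.End R A) :=
  mulRight R (mulLeft R a) - mulLeft R (mulLeft R a)

theorem commutatorMulLeft_apply (a : A) (E : Module.End R A) :
    commutatorMulLeft R a E = E ∘ₗ mulLeft R a - mulLeft R a ∘ₗ E :=
  rfl

@[simp]
theorem commutatorMulLeft_apply_apply (a : A) (E : Module.End R A) (x : A) :
    commutatorMulLeft R a E x = E (a * x) - a * E x :=
  rfl

theorem commutatorMulLeft_pow_char (p : ℕ) [Fact p.Prime] [CharP A p] (a : A) :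
    commutatorMulLeft R a ^ p = commutatorMulLeft R (a ^ p) := by
  have := Module.End.charP_of_charP R A p
  have := Module.End.charP_of_charP R (Module.End R A) p
  rw [commutatorMulLeft, sub_pow_char_of_commute (R := Module.End R (Module.End R A)) p
    (commute_mulLeft_right (R := R) (mulLeft R a) (mulLeft R a)).symm,
    pow_mulRight, pow_mulLeft, pow_mulLeft, pow_mulLeft]
  rfl

variable {R}

theorem apply_eq_mul_apply_one_of_commutatorMulLeft_eq_zero {b : A} {E : Module.End R A}
    (h : commutatorMulLeft R b E = 0) : E b = b * E 1 := by
  simpa [sub_eq_zero] using LinearMap.congr_fun h 1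

end Commutator

theorem IsDiffOpLE.commutatorMulLeft_pow_eq_zero {R A : Type*} [CommRing R] [CommRing A]
    [Algebra R A] {m : ℕ} {D : Module.End R A} (hD : IsDiffOpLE R m D) (a b : A) :
    commutatorMulLeft R b ((commutatorMulLeft R a ^ m) D) = 0 := by
  have h := hD (Fin.snoc (fun _ : Fin m => a) b)
  simp only [Fin.foldl_succ_last, Fin.snoc_castSucc, Fin.snoc_last,
    ← commutatorMulLeft_apply] at h
  rwa [Fin.foldl_const (commutatorMulLeft R a), ← Module.End.pow_apply] at h

/-- In characteristic `p`, if `D` has order `≤ p`, kills `1`, and satisfies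
`D (a^p) = (δ a)^p` for a derivation `δ`, then `[D, t_(a^p)]` is multiplication by
`(δ a)^p`:  `D (a^p * b) = a^p * D b + (δ a)^p * b`. -/
theorem diffOp_order_p_pth_power_leibniz (p : ℕ) (hp : p.Prime) (R A : Type*) [CommRing R]
    [CommRing A] [Algebra R A] [CharP A p] (δ : Derivation R A A) (D : A →ₗ[R] A)
    (hD1 : D 1 = 0) (hord : IsDiffOpLE R p D) (hfrob : ∀ a : A, D (a ^ p) = (δ a) ^ p)
    (a b : A) :
    D (a ^ p * b) = a ^ p * D b + (δ a) ^ p * b := by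
  have := Fact.mk hp
  set C := commutatorMulLeft R (a ^ p) D
  have hC1 : C 1 = (δ a) ^ p := by simp [C, hD1, hfrob]
  have hCb : C b = b * C 1 := by
    apply apply_eq_mul_apply_one_of_commutatorMulLeft_eq_zero
    rw [show C = (commutatorMulLeft R a ^ p) D by rw [commutatorMulLeft_pow_char]]
    exact hord.commutatorMulLeft_pow_eq_zero a b
  rw [hC1, commutatorMulLeft_apply_apply] at hCb
  linear_combination hCb
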